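/- arXiv:2205.14097 — 2 statements merged into one kernel-verified Lean document; each statement's English description precedes it below -/
import Mathlib

section
/- Let G = (V,E) be a finite simple graph such that both G and its graph complement Gᶜ = (V,Eᶜ) are connected, and equip each with its geodesic metric. If (V, d_G) is a natural metric space, then (V, d_{Gᶜ}) is a natural metric space. -/
/-- A group structure `s` on `X` is compatible with a (ℕ-valued) distance `d`: all left
translations, right translations, and the inversion preserve `d`. -/
def CompatibleN {X : Type*} (d : X → X → ℕ) (s : Group X) : Prop :=
  (∀ g x y : X, d (s.mul g x) (s.mul g y) = d x y) ∧
  (∀ g x y : X, d (s.mul x g) (s.mul y g) = d x y) ∧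
  (∀ x y : X, d (s.inv x) (s.inv y) = d x y)

/-- Two group structures are isomorphic as groups. -/
def GroupStructIso {X Y : Type*} (s : Group X) (t : Group Y) : Prop :=
  ∃ f : X ≃ Y, ∀ a b : X, f (s.mul a b) = t.mul (f a) (f b)

/-- A (ℕ-valued) distance `d` on `X` is natural: there is a compatible group structure and
any two compatible group structures are isomorphic. -/
def NaturalN {X : Type*} (d : X → X → ℕ) : Prop :=
  (∃ s : Group X, CompatibleN d s) ∧
  ∀ s t : Group X, CompatibleN d s → CompatibleN d t → GroupStructIso s t

/-!
A bijection of the vertex set preserves the geodesic metric of a graph exactly when it preserves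
adjacency (adjacency is distance one), and then it also preserves non-adjacency of distinct
vertices, i.e. it is an automorphism of the complement too. Hence a group structure is compatible
with `d_G` iff it is compatible with `d_{Gᶜ}`, so both metrics have the same compatible group
structures and naturality transfers.
-/

namespace SimpleGraph

variable {V W : Type*} {G : SimpleGraph V} {H : SimpleGraph W}

def Iso.compl (φ : G ≃g H) : Gᶜ ≃g Hᶜ :=
  { φ.toEquiv with
    map_rel_iff' := by simp [compl_adj, φ.map_adj_iff, φ.injective.ne_iff] }

lemma Iso.dist_map_le (φ : G ≃g H) (u v : V) : H.dist (φ u) (φ v) ≤ G.dist u v := by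
  by_cases hr : G.Reachable u v
  · obtain ⟨p, hp⟩ := hr.exists_walk_length_eq_dist
    simpa [hp] using dist_le (p.map φ.toHom)
  · simp [dist_eq_zero_of_not_reachable (Iso.reachable_iff.not.mpr hr)]

lemma Iso.dist_map (φ : G ≃g H) (u v : V) : H.dist (φ u) (φ v) = G.dist u v :=
  le_antisymm (φ.dist_map_le u v) (by simpa using φ.symm.dist_map_le (φ u) (φ v))

def isoOfDistEq (f : V ≃ W) (hf : ∀ x y, H.dist (f x) (f y) = G.dist x y) : G ≃g H :=
  { f with map_rel_iff' := by simp [← dist_eq_one_iff_adj, hf] }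

lemma dist_compl_eq_of_dist_eq (f : V ≃ W) (hf : ∀ x y, H.dist (f x) (f y) = G.dist x y)
    (x y : V) : Hᶜ.dist (f x) (f y) = Gᶜ.dist x y :=
  (isoOfDistEq f hf).compl.dist_map x y

end SimpleGraph

open SimpleGraph

lemma CompatibleN.compl {V : Type*} {G : SimpleGraph V} {s : Group V}
    (hs : CompatibleN G.dist s) : CompatibleN Gᶜ.dist s := by
  let _ : Group V := s
  obtain ⟨hl, hr, hi⟩ := hs
  exact ⟨fun g => dist_compl_eq_of_dist_eq (Equiv.mulLeft g) (hl g),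
    fun g => dist_compl_eq_of_dist_eq (Equiv.mulRight g) (hr g),
    dist_compl_eq_of_dist_eq (Equiv.inv V) hi⟩

lemma compatibleN_compl_iff {V : Type*} {G : SimpleGraph V} {s : Group V} :
    CompatibleN Gᶜ.dist s ↔ CompatibleN G.dist s :=
  ⟨fun hs => compl_compl G ▸ hs.compl, CompatibleN.compl⟩

theorem natural_graph_complement_general
    {V : Type*} (G : SimpleGraph V)
    (h : NaturalN G.dist) : NaturalN Gᶜ.dist := by
  simpa only [NaturalN, compatibleN_compl_iff] using h

/-- If a finite simple graph and its complement are both connected and the graph with its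
geodesic metric is a natural metric space, then so is its complement with its geodesic
metric. -/
theorem natural_graph_complement
    {V : Type*} [Fintype V] (G : SimpleGraph V)
    (hG : G.Connected) (hGc : Gᶜ.Connected)
    (h : NaturalN G.dist) : NaturalN Gᶜ.dist :=
  natural_graph_complement_general G h
end

section
/- If G and H are finite natural groups, then the direct product G × H is a natural group. -/
/-- A group structure `s` on `X` is compatible with the metric `m`: all left translations,
right translations, and the inversion are isometries. -/
def Compatible {X : Type*} (m : MetricSpace X) (s : Group X) : Prop :=
  (∀ g x y : X, m.dist (s.mul g x) (s.mul g y) = m.dist x y) ∧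
  (∀ g x y : X, m.dist (s.mul x g) (s.mul y g) = m.dist x y) ∧
  (∀ x y : X, m.dist (s.inv x) (s.inv y) = m.dist x y)

/-- A group `G` is natural if there is a metric on its underlying set with which its group
structure is compatible such that every group structure compatible with this metric is
isomorphic to `G`. -/
def NaturalGroup (G : Type*) [grp : Group G] : Prop :=
  ∃ m : MetricSpace G,
    Compatible m grp ∧ ∀ s : Group G, Compatible m s → GroupStructIso s grp

/-!
Rescale the metric of each factor so that distinct points of `G` are at distance in `(3, 4)` and
distinct points of `H` at distance in `(1, 2)`; this does not affect compatibility, which only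
depends on which pairs of points are equally far apart. For the `ℓ¹` product metric the distance
between two pairs then tells whether their first, and whether their second, coordinates agree.
So the translations of any compatible group structure on `G × H` respect both coordinate
partitions, which makes it a product of group structures on `G` and `H`; these are compatible
with the factor metrics and hence isomorphic to the given ones.
-/

open Set

noncomputable section

section Squash

-- Nonzero values lie in `(c, c + 1)`, so for `1 ≤ c` the triangle inequality is automatic.
def squashDist (c t : ℝ) : ℝ := if t = 0 then 0 else c + t / (1 + t)

@[simp] lemma squashDist_zero (c : ℝ) : squashDist c 0 = 0 := if_pos rfl

lemma squashDist_mem_Ioo (c : ℝ) {t : ℝ} (ht : 0 < t) : squashDist c t ∈ Ioo c (c + 1) := by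
  rw [squashDist, if_neg ht.ne']
  have h0 : 0 < t / (1 + t) := by positivity
  have h1 : t / (1 + t) < 1 := (div_lt_one (by positivity)).2 (by linarith)
  exact ⟨by linarith, by linarith⟩

lemma squashDist_injOn {c : ℝ} (hc : 0 ≤ c) : InjOn (squashDist c) (Ici 0) := by
  intro t (ht : 0 ≤ t) u (hu : 0 ≤ u) h
  rcases ht.eq_or_lt with rfl | ht <;> rcases hu.eq_or_lt with rfl | hu
  · rfl
  · linarith [(squashDist_mem_Ioo c hu).1, squashDist_zero c]
  · linarith [(squashDist_mem_Ioo c ht).1, squashDist_zero c]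
  · rw [squashDist, squashDist, if_neg ht.ne', if_neg hu.ne', add_right_inj,
      div_eq_div_iff (by linarith) (by linarith)] at h
    linarith

variable {X : Type*}

lemma squashDist_dist_triangle {c : ℝ} (hc : 1 ≤ c) (m : MetricSpace X) (x y z : X) :
    squashDist c (m.dist x z) ≤ squashDist c (m.dist x y) + squashDist c (m.dist y z) := by
  let _ := m
  rcases eq_or_ne x y with rfl | hxy
  · simp
  rcases eq_or_ne y z with rfl | hyz
  · simp
  have hxy := (squashDist_mem_Ioo c (dist_pos.2 hxy)).1
  have hyz := (squashDist_mem_Ioo c (dist_pos.2 hyz)).1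
  rcases eq_or_ne x z with rfl | hxz
  · simp only [dist_self, squashDist_zero]; linarith
  linarith [(squashDist_mem_Ioo c (dist_pos.2 hxz)).2]

abbrev MetricSpace.squash (m : MetricSpace X) {c : ℝ} (hc : 1 ≤ c) : MetricSpace X where
  dist x y := squashDist c (m.dist x y)
  dist_self x := by simp
  dist_comm x y := by rw [m.dist_comm]
  dist_triangle := squashDist_dist_triangle hc m
  eq_of_dist_eq_zero {x y} h := by
    let _ := m
    by_contra hxy
    linarith [(squashDist_mem_Ioo c (dist_pos.2 hxy)).1]

end Squash

section Compatible

variable {X : Type*}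

theorem compatible_iff_mul [s : Group X] (m : MetricSpace X) :
    Compatible m s ↔ (∀ g x y : X, m.dist (g * x) (g * y) = m.dist x y) ∧
      (∀ g x y : X, m.dist (x * g) (y * g) = m.dist x y) ∧
      ∀ x y : X, m.dist x⁻¹ y⁻¹ = m.dist x y :=
  Iff.rfl

theorem compatible_iff_of_dist_eq_iff {m m' : MetricSpace X}
    (h : ∀ x y z w : X, m.dist x y = m.dist z w ↔ m'.dist x y = m'.dist z w) (s : Group X) :
    Compatible m s ↔ Compatible m' s := by
  simp only [Compatible, h]

theorem compatible_squash_iff (m : MetricSpace X) {c : ℝ} (hc : 1 ≤ c) (s : Group X) :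
    Compatible (m.squash hc) s ↔ Compatible m s :=
  let _ := m
  compatible_iff_of_dist_eq_iff
    (fun _ _ _ _ => (squashDist_injOn (by linarith)).eq_iff dist_nonneg dist_nonneg) s

theorem NaturalGroup.exists_metric_dist_mem_Ioo {G : Type*} [grp : Group G] (hG : NaturalGroup G)
    {c : ℝ} (hc : 1 ≤ c) :
    ∃ m : MetricSpace G, Compatible m grp ∧
      (∀ s : Group G, Compatible m s → GroupStructIso s grp) ∧ ∀ x y : G, x ≠ y → m.dist x y ∈ Ioo c (c + 1) := by
  obtain ⟨m, hm, huniq⟩ := hG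
  let _ := m
  refine ⟨m.squash hc, (compatible_squash_iff m hc grp).2 hm,
    fun s hs => huniq s ((compatible_squash_iff m hc s).1 hs),
    fun x y hxy => squashDist_mem_Ioo c (dist_pos.2 hxy)⟩

theorem Compatible.map_mul_congr {Y : Type*} {s : Group X} {m : MetricSpace X}
    (hs : Compatible m s) {f : X → Y} {P : ℝ → Prop}
    (hf : ∀ x y, f x = f y ↔ P (m.dist x y))
    {x x' y y' : X} (hx : f x = f x') (hy : f y = f y') : f (s.mul x y) = f (s.mul x' y') := by
  obtain ⟨hl, hr, -⟩ := hs
  calc f (s.mul x y) = f (s.mul x y') := (hf _ _).2 (by rw [hl]; exact (hf _ _).1 hy)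
    _ = f (s.mul x' y') := (hf _ _).2 (by rw [hr]; exact (hf _ _).1 hx)

end Compatible

section SumProd

variable {G H : Type*}

abbrev MetricSpace.sumProd (mG : MetricSpace G) (mH : MetricSpace H) : MetricSpace (G × H) :=
  let _ := mG; let _ := mH
  MetricSpace.induced (WithLp.toLp 1) (WithLp.toLp_injective 1) inferInstance

theorem MetricSpace.sumProd_dist (mG : MetricSpace G) (mH : MetricSpace H) (p q : G × H) :
    (mG.sumProd mH).dist p q = mG.dist p.1 q.1 + mH.dist p.2 q.2 := by
  let _ := mG; let _ := mH
  change dist (WithLp.toLp 1 p) (WithLp.toLp 1 q) = _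
  simpa using WithLp.prod_dist_eq_add (p := 1) (by simp) (WithLp.toLp 1 p) (WithLp.toLp 1 q)

theorem compatible_sumProd_iff (mG : MetricSpace G) (mH : MetricSpace H) (sG : Group G)
    (sH : Group H) :
    Compatible (mG.sumProd mH) (@Prod.instGroup G H sG sH) ↔
      Compatible mG sG ∧ Compatible mH sH := by
  let _ := sG; let _ := sH
  simp only [compatible_iff_mul, MetricSpace.sumProd_dist]
  constructor
  · rintro ⟨hl, hr, hi⟩
    refine ⟨⟨fun g x y => ?_, fun g x y => ?_, fun x y => ?_⟩,
      ⟨fun g x y => ?_, fun g x y => ?_, fun x y => ?_⟩⟩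
    · simpa using hl (g, 1) (x, 1) (y, 1)
    · simpa using hr (g, 1) (x, 1) (y, 1)
    · simpa using hi (x, 1) (y, 1)
    · simpa using hl (1, g) (1, x) (1, y)
    · simpa using hr (1, g) (1, x) (1, y)
    · simpa using hi (1, x) (1, y)
  · rintro ⟨⟨hGl, hGr, hGi⟩, ⟨hHl, hHr, hHi⟩⟩
    exact ⟨fun g x y => congrArg₂ (· + ·) (hGl _ _ _) (hHl _ _ _),
      fun g x y => congrArg₂ (· + ·) (hGr _ _ _) (hHr _ _ _),
      fun x y => congrArg₂ (· + ·) (hGi _ _) (hHi _ _)⟩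

theorem MetricSpace.eq_and_dist_eq_zero_or_ne_and_dist_mem_Ioo {X : Type*} {m : MetricSpace X}
    {c : ℝ} (hm : ∀ x y : X, x ≠ y → m.dist x y ∈ Ioo c (c + 1)) (x y : X) :
    (x = y ∧ m.dist x y = 0) ∨ (x ≠ y ∧ m.dist x y ∈ Ioo c (c + 1)) := by
  let _ := m
  rcases eq_or_ne x y with h | h
  · exact .inl ⟨h, dist_eq_zero.2 h⟩
  · exact .inr ⟨h, hm x y h⟩

section DistCharacterization

variable {mG : MetricSpace G} {mH : MetricSpace H} {a b : ℝ}
  (hG : ∀ x y : G, x ≠ y → mG.dist x y ∈ Ioo a (a + 1))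
  (hH : ∀ x y : H, x ≠ y → mH.dist x y ∈ Ioo b (b + 1))
include hG hH

theorem MetricSpace.sumProd_fst_eq_iff (hab : b + 1 ≤ a) (hb : 0 ≤ b) (p q : G × H) :
    p.1 = q.1 ↔ (mG.sumProd mH).dist p q < b + 1 := by
  rw [MetricSpace.sumProd_dist]
  rcases eq_and_dist_eq_zero_or_ne_and_dist_mem_Ioo hG p.1 q.1 with
    ⟨h1, d1⟩ | ⟨h1, d1, -⟩ <;>
  rcases eq_and_dist_eq_zero_or_ne_and_dist_mem_Ioo hH p.2 q.2 with ⟨-, d2⟩ | ⟨-, d2, d2'⟩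
  all_goals first
    | exact iff_of_true h1 (by linarith)
    | exact iff_of_false h1 (by linarith)

theorem MetricSpace.sumProd_snd_eq_iff (hab : b + 1 ≤ a) (hb : 1 ≤ b) (p q : G × H) :
    p.2 = q.2 ↔ (mG.sumProd mH).dist p q ∈ Iio b ∪ Ioo a (a + 1) := by
  rw [MetricSpace.sumProd_dist, mem_union, mem_Iio, mem_Ioo]
  rcases eq_and_dist_eq_zero_or_ne_and_dist_mem_Ioo hG p.1 q.1 with
    ⟨-, d1⟩ | ⟨-, d1, d1'⟩ <;>
  rcases eq_and_dist_eq_zero_or_ne_and_dist_mem_Ioo hH p.2 q.2 with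
    ⟨h2, d2⟩ | ⟨h2, d2, d2'⟩
  all_goals first
    | exact iff_of_true h2 (by first | left; linarith | right; constructor <;> linarith)
    | exact iff_of_false h2 (by rintro (h | ⟨h, h'⟩) <;> linarith)

end DistCharacterization

end SumProd

section Pushforward

variable {X Y : Type*} [Group X]

/-- The quotient of `X` by the congruence `ker f`, realised on `Y` through the section `σ`. -/
abbrev Group.pushforward (f : X → Y) (σ : Y → X) (hσ : ∀ y, f (σ y) = y)
    (hf : ∀ {x x' y y' : X}, f x = f x' → f y = f y' → f (x * y) = f (x' * y')) : Group Y :=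
  letI : Mul Y := ⟨fun a b => f (σ a * σ b)⟩
  letI : Inv Y := ⟨fun a => f (σ a)⁻¹⟩
  letI : One Y := ⟨f 1⟩
  Group.ofLeftAxioms
    (fun a b c => show f (σ (f (σ a * σ b)) * σ c) = f (σ a * σ (f (σ b * σ c))) by
      rw [hf (hσ _) rfl, mul_assoc, hf rfl (hσ _)])
    (fun a => show f (σ (f 1) * σ a) = a by rw [hf (hσ (f 1)) rfl, one_mul, hσ])
    (fun a => show f (σ (f (σ a)⁻¹) * σ a) = f 1 by rw [hf (hσ _) rfl, inv_mul_cancel])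

theorem Group.pushforward_map_mul (f : X → Y) (σ : Y → X) (hσ : ∀ y, f (σ y) = y)
    (hf : ∀ {x x' y y' : X}, f x = f x' → f y = f y' → f (x * y) = f (x' * y')) (x y : X) :
    f (x * y) = (Group.pushforward f σ hσ hf).mul (f x) (f y) :=
  hf (hσ _).symm (hσ _).symm

end Pushforward

theorem Group.eq_prod_of_mul_congr {G H : Type*} (s : Group (G × H))
    (hfst : ∀ {x x' y y' : G × H}, x.1 = x'.1 → y.1 = y'.1 →
      (s.mul x y).1 = (s.mul x' y').1)
    (hsnd : ∀ {x x' y y' : G × H}, x.2 = x'.2 → y.2 = y'.2 →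
      (s.mul x y).2 = (s.mul x' y').2) :
    ∃ (sG : Group G) (sH : Group H), s = @Prod.instGroup G H sG sH := by
  let _ := s
  let σG (a : G) : G × H := (a, (1 : G × H).2)
  let σH (b : H) : G × H := ((1 : G × H).1, b)
  refine ⟨.pushforward Prod.fst σG (fun _ => rfl) hfst,
    .pushforward Prod.snd σH (fun _ => rfl) hsnd, Group.ext <| funext₂ fun x y => Prod.ext ?_ ?_⟩
  · exact Group.pushforward_map_mul Prod.fst σG (fun _ => rfl) hfst x y
  · exact Group.pushforward_map_mul Prod.snd σH (fun _ => rfl) hsnd x y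

theorem GroupStructIso.prod {G H G' H' : Type*} {sG : Group G} {sH : Group H} {tG : Group G'}
    {tH : Group H'} (hG : GroupStructIso sG tG) (hH : GroupStructIso sH tH) :
    GroupStructIso (@Prod.instGroup G H sG sH) (@Prod.instGroup G' H' tG tH) := by
  obtain ⟨eG, heG⟩ := hG
  obtain ⟨eH, heH⟩ := hH
  exact ⟨eG.prodCongr eH, fun a b => Prod.ext (heG a.1 b.1) (heH a.2 b.2)⟩

end

theorem naturalGroup_prod_general (G H : Type*) [Group G] [Group H]
    (hG : NaturalGroup G) (hH : NaturalGroup H) : NaturalGroup (G × H) := by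
  obtain ⟨mG, hGc, hGu, hGd⟩ := hG.exists_metric_dist_mem_Ioo (c := 3) (by norm_num)
  obtain ⟨mH, hHc, hHu, hHd⟩ := hH.exists_metric_dist_mem_Ioo (c := 1) le_rfl
  refine ⟨mG.sumProd mH, (compatible_sumProd_iff mG mH _ _).2 ⟨hGc, hHc⟩, fun s hs => ?_⟩
  obtain ⟨sG, sH, rfl⟩ := Group.eq_prod_of_mul_congr s
    (hs.map_mul_congr (P := (· < 1 + 1))
      (MetricSpace.sumProd_fst_eq_iff hGd hHd (by norm_num) zero_le_one))
    (hs.map_mul_congr (P := (· ∈ Iio 1 ∪ Ioo 3 (3 + 1)))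
      (MetricSpace.sumProd_snd_eq_iff hGd hHd (by norm_num) le_rfl))
  obtain ⟨hsG, hsH⟩ := (compatible_sumProd_iff mG mH sG sH).1 hs
  exact (hGu sG hsG).prod (hHu sH hsH)

/-- The direct product of two finite natural groups is a natural group. -/
theorem naturalGroup_prod (G H : Type*) [Group G] [Group H] [Finite G] [Finite H]
    (hG : NaturalGroup G) (hH : NaturalGroup H) : NaturalGroup (G × H) :=
  naturalGroup_prod_general G H hG hH
end
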